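/- In the setting of a C-convex vector optimization problem with nontrivial P = cl(Γ[X] + C), dual image D := −epi f* = {(w,s) ∈ ℝ^{q−1} × ℝ : c*(w) ∈ C⁺, s ≤ −f*(−w)}, and ψ(y,v) := (v₁,…,v_{q−1},1)·T⁻¹·y − v_q, H(v) := {y ∈ ℝ^q : ψ(y,v) = 0}, H*(y) := {v ∈ ℝ^q : ψ(y,v) = 0}: the mapping Ψ̂(F*) := ⋂_{v ∈ F*} H(v) ∩ P is an inclusion-reversing one-to-one map between the set of all K-maximal exposed faces of D and the set of all relatively C-minimal exposed faces of P, with inverse Ψ̂⁻¹(F) = ⋂_{y ∈ F} H*(y) ∩ D. -/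

import Mathlib

open Matrix Set
open scoped Pointwise

noncomputable section

/-- Γ is C-convex. -/
def CConvex (q m : ℕ) (C : Set (Fin (q + 1) → ℝ))
    (Γ : (Fin m → ℝ) → Fin (q + 1) → ℝ) : Prop :=
  ∀ x₁ x₂ : Fin m → ℝ, ∀ t ∈ Set.Icc (0 : ℝ) 1,
    (1 - t) • Γ x₁ + t • Γ x₂ - Γ ((1 - t) • x₁ + t • x₂) ∈ C

/-- The upper closed extended image P = cl(Γ[X] + C). -/
def Pimg (q m : ℕ) (Γ : (Fin m → ℝ) → Fin (q + 1) → ℝ) (X : Set (Fin m → ℝ))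
    (C : Set (Fin (q + 1) → ℝ)) : Set (Fin (q + 1) → ℝ) :=
  closure (Γ '' X + C)

/-- The linear map E, sending z ∈ ℝ^{q-1} to Ez = Σ z_i e^i. -/
def Emap (q : ℕ) (e : Fin q → Fin (q + 1) → ℝ) (z : Fin q → ℝ) : Fin (q + 1) → ℝ :=
  ∑ i, z i • e i

/-- The scalarization functional φ(y) = inf{r ∈ ℝ : r·k − y ∈ C} (inf ∅ = +∞). -/
def phiF (q : ℕ) (C : Set (Fin (q + 1) → ℝ)) (k : Fin (q + 1) → ℝ)
    (y : Fin (q + 1) → ℝ) : EReal :=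
  sInf ((fun r : ℝ => (r : EReal)) '' {r : ℝ | r • k - y ∈ C})

/-- f(z) = inf_{x ∈ X} φ(Γ(x) − Ez). -/
def fF (q m : ℕ) (C : Set (Fin (q + 1) → ℝ)) (k : Fin (q + 1) → ℝ)
    (e : Fin q → Fin (q + 1) → ℝ) (Γ : (Fin m → ℝ) → Fin (q + 1) → ℝ)
    (X : Set (Fin m → ℝ)) (z : Fin q → ℝ) : EReal :=
  ⨅ x ∈ X, phiF q C k (Γ x - Emap q e z)

/-- The matrix T = (e¹,…,e^{q−1},k) (columns e¹,…,e^{q−1},k). -/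
def Tmat (q : ℕ) (e : Fin q → Fin (q + 1) → ℝ) (k : Fin (q + 1) → ℝ) :
    Matrix (Fin (q + 1)) (Fin (q + 1)) ℝ :=
  Matrix.of fun i j => (Fin.snoc e k : Fin (q + 1) → Fin (q + 1) → ℝ) j i

/-- The Legendre–Fenchel conjugate f*(w) = sup_z (⟨z,w⟩ − f(z)). -/
def conjq (q : ℕ) (f : (Fin q → ℝ) → EReal) (w : Fin q → ℝ) : EReal :=
  ⨆ z : Fin q → ℝ, (((z ⬝ᵥ w : ℝ) : EReal) - f z)

/-- The epigraph of an extended-real-valued function on ℝ^{q-1}. -/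
def epi (q : ℕ) (f : (Fin q → ℝ) → EReal) : Set ((Fin q → ℝ) × ℝ) :=
  {p | f p.1 ≤ (p.2 : EReal)}

/-- The dual image D = −epi f*. -/
def Dimg (q m : ℕ) (C : Set (Fin (q + 1) → ℝ)) (k : Fin (q + 1) → ℝ)
    (e : Fin q → Fin (q + 1) → ℝ) (Γ : (Fin m → ℝ) → Fin (q + 1) → ℝ)
    (X : Set (Fin m → ℝ)) : Set ((Fin q → ℝ) × ℝ) :=
  -(epi q (conjq q (fF q m C k e Γ X)))

/-- The coupling function ψ(y,v) = (v₁,…,v_{q−1},1)·T⁻¹·y − v_q, written with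
M = T⁻¹. -/
def psiB (q : ℕ) (M : Matrix (Fin (q + 1)) (Fin (q + 1)) ℝ)
    (y : Fin (q + 1) → ℝ) (v : (Fin q → ℝ) × ℝ) : ℝ :=
  (Fin.snoc v.1 1 : Fin (q + 1) → ℝ) ⬝ᵥ (M *ᵥ y) - v.2

/-- Ψ̂(F*) = ⋂_{v ∈ F*} H(v) ∩ P, with H(v) = {y : ψ(y,v) = 0}. -/
def PsiHat (q : ℕ) (M : Matrix (Fin (q + 1)) (Fin (q + 1)) ℝ)
    (P : Set (Fin (q + 1) → ℝ)) (Fs : Set ((Fin q → ℝ) × ℝ)) :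
    Set (Fin (q + 1) → ℝ) :=
  ⋂ v ∈ Fs, ({y | psiB q M y v = 0} ∩ P)

/-- Ψ̂⁻¹(F) = ⋂_{y ∈ F} H*(y) ∩ D, with H*(y) = {v : ψ(y,v) = 0}. -/
def PsiHatInv (q : ℕ) (M : Matrix (Fin (q + 1)) (Fin (q + 1)) ℝ)
    (D : Set ((Fin q → ℝ) × ℝ)) (F : Set (Fin (q + 1) → ℝ)) :
    Set ((Fin q → ℝ) × ℝ) :=
  ⋂ y ∈ F, ({v | psiB q M y v = 0} ∩ D)

/-- The ordering cone K = {0}^{q−1} × [0,∞) in ℝ^{q−1} × ℝ. -/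
def KconeQ (q : ℕ) : Set ((Fin q → ℝ) × ℝ) := {p | p.1 = 0 ∧ 0 ≤ p.2}

/-- v is K-maximal in A : ({v} + (K \ (−K))) ∩ A = ∅. -/
def KMaxPt (q : ℕ) (A : Set ((Fin q → ℝ) × ℝ)) (v : (Fin q → ℝ) × ℝ) : Prop :=
  ({v} + (KconeQ q \ (-KconeQ q))) ∩ A = ∅

/-- A supporting hyperplane to a set in ℝ^{q−1} × ℝ. -/
def IsSuppHypD (q : ℕ) (A : Set ((Fin q → ℝ) × ℝ)) (u : Fin q → ℝ) (s α : ℝ) : Prop :=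
  (u, s) ≠ 0 ∧ ({p : (Fin q → ℝ) × ℝ | p.1 ⬝ᵥ u + p.2 * s = α} ∩ A).Nonempty ∧
    ∀ p ∈ A, p.1 ⬝ᵥ u + p.2 * s ≤ α

/-- F is a K-maximal exposed face of A ⊆ ℝ^{q−1} × ℝ. -/
def IsKMaxExpFace (q : ℕ) (A F : Set ((Fin q → ℝ) × ℝ)) : Prop :=
  (∃ (u : Fin q → ℝ) (s α : ℝ), IsSuppHypD q A u s α ∧
      F = {p : (Fin q → ℝ) × ℝ | p.1 ⬝ᵥ u + p.2 * s = α} ∩ A) ∧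
    ∀ v ∈ F, KMaxPt q A v

/-- A supporting hyperplane to a set in ℝ^q. -/
def IsSuppHypP (q : ℕ) (A : Set (Fin (q + 1) → ℝ)) (v : Fin (q + 1) → ℝ) (α : ℝ) : Prop :=
  v ≠ 0 ∧ ({y | v ⬝ᵥ y = α} ∩ A).Nonempty ∧ ∀ y ∈ A, v ⬝ᵥ y ≤ α

/-- F is a relatively C-minimal exposed face of A ⊆ ℝ^q. -/
def IsRelCMinExpFace (q : ℕ) (C : Set (Fin (q + 1) → ℝ))
    (A F : Set (Fin (q + 1) → ℝ)) : Prop :=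
  (∃ (v : Fin (q + 1) → ℝ) (α : ℝ), IsSuppHypP q A v α ∧
      F = {y | v ⬝ᵥ y = α} ∩ A) ∧
    ∀ y ∈ F, A ∩ ({y} - intrinsicInterior ℝ C) = ∅

/-!
The coupling ψ makes P and D polar to each other: v ∈ D iff ψ(·, v) ≥ 0 on P (this is f* unfolded),
and y ∈ P iff ψ(y, ·) ≥ 0 on D (by separation, since the closed half-spaces {c·y ≥ β} with c·k > 0
are exactly the sets {ψ(·, v) ≥ 0}).

The normal of a K-maximal exposed face of D is non-vertical, so the face is {v ∈ D : ψ(y, v) = 0}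
for a point y, which lies in P by polarity. Dually, the normal n of a relatively C-minimal exposed
face of P has n·k < 0, so the face is {y ∈ P : ψ(y, v) = 0} for some v ∈ D. Conversely, every
nonempty set of either form is a face of the other kind. Finally, if v₀ is a relative interior
point of a face F* of D, then H(v₀) ∩ P is already Ψ̂(F*), and symmetrically for faces of P; this
is what makes the two maps inverse to each other.
-/

section Convexity

variable {E : Type*} [AddCommGroup E] [Module ℝ E]

theorem convex_setOf_eq_zero_of_affine {g : E → ℝ}
    (hg : ∀ x y : E, ∀ a b : ℝ, a + b = 1 → g (a • x + b • y) = a * g x + b * g y) :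
    Convex ℝ {x | g x = 0} := by
  intro x hx y hy a b _ _ hab
  change g (a • x + b • y) = 0
  rw [hg x y a b hab, show g x = 0 from hx, show g y = 0 from hy]
  ring

theorem add_mem_of_convex_of_smul_mem {C : Set E} (hcv : Convex ℝ C)
    (hcone : ∀ c ∈ C, ∀ t : ℝ, 0 ≤ t → t • c ∈ C) {c₁ c₂ : E} (h₁ : c₁ ∈ C) (h₂ : c₂ ∈ C) :
    c₁ + c₂ ∈ C := by
  convert hcone _ (hcv h₁ h₂ one_half_pos.le one_half_pos.le (add_halves 1)) 2 zero_le_two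
    using 1
  module

variable [TopologicalSpace E] [IsTopologicalAddGroup E] [ContinuousSMul ℝ E]

theorem exists_pos_smul_add_mem_of_mem_intrinsicInterior {S : Set E} {x x₀ : E} (hx : x ∈ S)
    (hx₀ : x₀ ∈ intrinsicInterior ℝ S) : ∃ t : ℝ, 0 < t ∧ (1 + t) • x₀ + (-t) • x ∈ S := by
  obtain ⟨y₀, hy₀, rfl⟩ := hx₀
  have hline (t : ℝ) : (1 + t) • (y₀ : E) + (-t) • x ∈ affineSpan ℝ S := by
    convert AffineSubspace.smul_vsub_vadd_mem (affineSpan ℝ S) t y₀.2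
      (subset_affineSpan ℝ S hx) y₀.2 using 1
    simp only [vsub_eq_sub, vadd_eq_add]
    module
  let φ : ℝ → affineSpan ℝ S := fun t => ⟨_, hline t⟩
  have hφ : Continuous φ := Continuous.subtype_mk (by fun_prop) _
  have hφ0 : φ 0 = y₀ := Subtype.ext (by simp [φ])
  have hnhds : ∀ᶠ t in nhds 0, φ t ∈ interior ((↑) ⁻¹' S) :=
    hφ.continuousAt.preimage_mem_nhds (hφ0 ▸ isOpen_interior.mem_nhds hy₀)
  obtain ⟨t, ht, hmem⟩ := hnhds.exists_gt
  exact ⟨t, ht, (interior_subset hmem : φ t ∈ (↑) ⁻¹' S)⟩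

theorem eqOn_zero_of_nonneg_of_mem_intrinsicInterior {S : Set E} {x₀ : E} {g : E → ℝ}
    (hg : ∀ x y : E, ∀ a b : ℝ, a + b = 1 → g (a • x + b • y) = a * g x + b * g y)
    (hS : ∀ x ∈ S, 0 ≤ g x) (hx₀ : x₀ ∈ intrinsicInterior ℝ S) (h0 : g x₀ = 0) :
    EqOn g 0 S := by
  intro x hx
  obtain ⟨t, ht, hmem⟩ := exists_pos_smul_add_mem_of_mem_intrinsicInterior hx hx₀
  have hbeyond := hS _ hmem
  rw [hg _ _ _ _ (by ring), h0] at hbeyond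
  have := hS x hx
  simp only [Pi.zero_apply]
  nlinarith

end Convexity

theorem nonneg_of_forall_le_add_mul {A B β : ℝ} (h : ∀ t : ℝ, 0 ≤ t → β ≤ A + t * B) :
    0 ≤ B := by
  by_contra! hB
  have ht : 0 ≤ (A - β + 1) / -B := div_nonneg (by linarith [h 0 le_rfl]) (by linarith)
  have hmul : (A - β + 1) / -B * B = -(A - β + 1) := by field_simp [hB.ne]
  linarith [h _ ht]

theorem exists_dotProduct_lt_forall_lt_of_notMem {ι : Type*} [Fintype ι] {A : Set (ι → ℝ)}
    (hAcv : Convex ℝ A) (hAcl : IsClosed A) {y : ι → ℝ} (hy : y ∉ A) :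
    ∃ (c : ι → ℝ) (β : ℝ), c ⬝ᵥ y < β ∧ ∀ a ∈ A, β < c ⬝ᵥ a := by
  classical
  obtain ⟨f, β, hfy, hfA⟩ := geometric_hahn_banach_point_closed hAcv hAcl hy
  set c := (dotProductEquiv ℝ ι).symm f.toLinearMap
  have hc (x : ι → ℝ) : c ⬝ᵥ x = f x := by
    rw [← dotProductEquiv_apply_apply, LinearEquiv.apply_symm_apply]
    rfl
  exact ⟨c, β, hc y ▸ hfy, fun a ha => hc a ▸ hfA a ha⟩

theorem snoc_dotProduct_snoc {R : Type*} [NonUnitalNonAssocSemiring R] {n : ℕ}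
    (a b : Fin n → R) (x y : R) :
    (Fin.snoc a x : Fin (n + 1) → R) ⬝ᵥ Fin.snoc b y = a ⬝ᵥ b + x * y := by
  simp [dotProduct, Fin.sum_univ_castSucc]

theorem EReal.coe_sub_le_coe_iff (a b : ℝ) (c : EReal) :
    (a : EReal) - c ≤ b ↔ ((a - b : ℝ) : EReal) ≤ c := by
  induction c using EReal.rec with
  | bot => simp [sub_eq_add_neg]
  | coe c =>
    rw [← EReal.coe_sub, EReal.coe_le_coe_iff, EReal.coe_le_coe_iff]
    constructor <;> intro <;> linarith
  | top => simp [sub_eq_add_neg]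

theorem KconeQ_diff_neg (q : ℕ) : KconeQ q \ -KconeQ q = {p | p.1 = 0 ∧ 0 < p.2} := by
  ext ⟨w, t⟩
  simp only [KconeQ, mem_sdiff, mem_neg, Prod.fst_neg, Prod.snd_neg, neg_eq_zero, neg_nonneg,
    mem_ofPred_eq, not_and, not_le]
  constructor
  · rintro ⟨⟨rfl, -⟩, h⟩
    exact ⟨rfl, h rfl⟩
  · rintro ⟨rfl, ht⟩
    exact ⟨⟨rfl, ht.le⟩, fun _ => ht⟩

theorem KMaxPt_iff {q : ℕ} {A : Set ((Fin q → ℝ) × ℝ)} {v : (Fin q → ℝ) × ℝ} :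
    KMaxPt q A v ↔ ∀ t : ℝ, 0 < t → (v.1, v.2 + t) ∉ A := by
  rw [KMaxPt, KconeQ_diff_neg, eq_empty_iff_forall_notMem]
  constructor
  · intro h t ht hmem
    exact h (v.1, v.2 + t) ⟨⟨v, rfl, (0, t), ⟨rfl, ht⟩, Prod.ext (add_zero _) rfl⟩, hmem⟩
  · rintro h _ ⟨⟨_, rfl, ⟨w, t⟩, ⟨rfl, ht⟩, rfl⟩, hmem⟩
    exact h t ht (by convert hmem using 1; exact Prod.ext (add_zero _).symm rfl)

section Coupling

variable {q : ℕ} (M : Matrix (Fin (q + 1)) (Fin (q + 1)) ℝ)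

theorem psiB_eq_vecMul_dotProduct (y : Fin (q + 1) → ℝ) (v : (Fin q → ℝ) × ℝ) :
    psiB q M y v = (Fin.snoc v.1 1 ᵥ* M) ⬝ᵥ y - v.2 := by
  rw [psiB, dotProduct_mulVec]

theorem psiB_eq_dotProduct_init_add_last (y : Fin (q + 1) → ℝ) (v : (Fin q → ℝ) × ℝ) :
    psiB q M y v = v.1 ⬝ᵥ Fin.init (M *ᵥ y) + (M *ᵥ y) (Fin.last q) - v.2 := by
  rw [psiB, ← Fin.snoc_init_self (M *ᵥ y), snoc_dotProduct_snoc, Fin.init_snoc, Fin.snoc_last,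
    one_mul]

theorem psiB_add_left (y c : Fin (q + 1) → ℝ) (v : (Fin q → ℝ) × ℝ) :
    psiB q M (y + c) v = psiB q M y v + (Fin.snoc v.1 1 ᵥ* M) ⬝ᵥ c := by
  simp only [psiB_eq_vecMul_dotProduct, dotProduct_add]
  ring

theorem psiB_mk_eq_add_sub (y : Fin (q + 1) → ℝ) (w : Fin q → ℝ) (s t : ℝ) :
    psiB q M y (w, s) = psiB q M y (w, t) + (t - s) := by
  simp only [psiB]
  ring

theorem psiB_affine_left (v : (Fin q → ℝ) × ℝ) (y y' : Fin (q + 1) → ℝ) (a b : ℝ)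
    (hab : a + b = 1) : psiB q M (a • y + b • y') v = a * psiB q M y v + b * psiB q M y' v := by
  simp only [psiB_eq_vecMul_dotProduct, dotProduct_add, dotProduct_smul, smul_eq_mul]
  linear_combination v.2 * hab

theorem psiB_affine_right (y : Fin (q + 1) → ℝ) (v v' : (Fin q → ℝ) × ℝ) (a b : ℝ)
    (hab : a + b = 1) : psiB q M y (a • v + b • v') = a * psiB q M y v + b * psiB q M y v' := by
  simp only [psiB_eq_dotProduct_init_add_last, Prod.fst_add, Prod.snd_add, Prod.smul_fst,
    Prod.smul_snd, add_dotProduct, smul_dotProduct, smul_eq_mul]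
  linear_combination -(M *ᵥ y) (Fin.last q) * hab

variable {P : Set (Fin (q + 1) → ℝ)} {D : Set ((Fin q → ℝ) × ℝ)}

@[simp]
theorem PsiHat_singleton (v : (Fin q → ℝ) × ℝ) :
    PsiHat q M P {v} = {y | psiB q M y v = 0} ∩ P := by
  simp [PsiHat]

@[simp]
theorem PsiHatInv_singleton (y : Fin (q + 1) → ℝ) :
    PsiHatInv q M D {y} = {v | psiB q M y v = 0} ∩ D := by
  simp [PsiHatInv]

theorem PsiHat_anti {Fs₁ Fs₂ : Set ((Fin q → ℝ) × ℝ)} (h : Fs₁ ⊆ Fs₂) :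
    PsiHat q M P Fs₂ ⊆ PsiHat q M P Fs₁ :=
  biInter_subset_biInter_left h

theorem PsiHatInv_PsiHat_PsiHatInv_singleton {y : Fin (q + 1) → ℝ} (hy : y ∈ P) :
    PsiHatInv q M D (PsiHat q M P (PsiHatInv q M D {y})) = PsiHatInv q M D {y} := by
  have hmem : y ∈ PsiHat q M P (PsiHatInv q M D {y}) :=
    mem_iInter₂.2 fun v hv => ⟨(mem_iInter₂.1 hv y rfl).1, hy⟩
  refine Subset.antisymm (biInter_subset_biInter_left (singleton_subset_iff.2 hmem)) ?_
  intro v hv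
  exact mem_iInter₂.2 fun y' hy' => ⟨(mem_iInter₂.1 hy' v hv).1, (mem_iInter₂.1 hv y rfl).2⟩

theorem PsiHat_PsiHatInv_PsiHat_singleton {v : (Fin q → ℝ) × ℝ} (hv : v ∈ D) :
    PsiHat q M P (PsiHatInv q M D (PsiHat q M P {v})) = PsiHat q M P {v} := by
  have hmem : v ∈ PsiHatInv q M D (PsiHat q M P {v}) :=
    mem_iInter₂.2 fun y hy => ⟨(mem_iInter₂.1 hy v rfl).1, hv⟩
  refine Subset.antisymm (biInter_subset_biInter_left (singleton_subset_iff.2 hmem)) ?_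
  intro y hy
  exact mem_iInter₂.2 fun v' hv' => ⟨(mem_iInter₂.1 hv' y hy).1, (mem_iInter₂.1 hy v rfl).2⟩

end Coupling

section BasisMatrix

variable {q : ℕ} {e : Fin q → Fin (q + 1) → ℝ} {k : Fin (q + 1) → ℝ}

theorem Tmat_mulVec_snoc (z : Fin q → ℝ) (r : ℝ) :
    Tmat q e k *ᵥ Fin.snoc z r = Emap q e z + r • k := by
  funext i
  simp only [Tmat, Emap, mulVec, dotProduct, of_apply, Fin.sum_univ_castSucc]
  simp [Finset.sum_apply, mul_comm]

theorem vecMul_Tmat_last (c : Fin (q + 1) → ℝ) : (c ᵥ* Tmat q e k) (Fin.last q) = c ⬝ᵥ k := by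
  simp [Tmat, vecMul, dotProduct]

theorem isUnit_det_Tmat (hli : LinearIndependent ℝ (Fin.snoc e k : Fin (q + 1) → Fin (q + 1) → ℝ)) :
    IsUnit (Tmat q e k).det := by
  rw [← isUnit_iff_isUnit_det, ← isUnit_transpose, ← linearIndependent_rows_iff_isUnit]
  exact hli

theorem Tmat_mulVec_inv_Tmat_mulVec
    (hli : LinearIndependent ℝ (Fin.snoc e k : Fin (q + 1) → Fin (q + 1) → ℝ))
    (y : Fin (q + 1) → ℝ) : Tmat q e k *ᵥ ((Tmat q e k)⁻¹ *ᵥ y) = y := by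
  rw [mulVec_mulVec, mul_nonsing_inv _ (isUnit_det_Tmat hli), one_mulVec]

theorem psiB_Tmat_mulVec_snoc
    (hli : LinearIndependent ℝ (Fin.snoc e k : Fin (q + 1) → Fin (q + 1) → ℝ))
    (z : Fin q → ℝ) (r : ℝ) (w : Fin q → ℝ) (s : ℝ) :
    psiB q (Tmat q e k)⁻¹ (Tmat q e k *ᵥ Fin.snoc z r) (w, s) = w ⬝ᵥ z + r - s := by
  rw [psiB, mulVec_mulVec, nonsing_inv_mul _ (isUnit_det_Tmat hli), one_mulVec,
    snoc_dotProduct_snoc, one_mul]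

theorem exists_Tmat_mulVec_snoc_eq
    (hli : LinearIndependent ℝ (Fin.snoc e k : Fin (q + 1) → Fin (q + 1) → ℝ))
    (y : Fin (q + 1) → ℝ) : ∃ z r, Tmat q e k *ᵥ Fin.snoc z r = y :=
  ⟨_, _, (congrArg _ (Fin.snoc_init_self _)).trans (Tmat_mulVec_inv_Tmat_mulVec hli y)⟩

theorem vecMul_snoc_inv_Tmat_dotProduct
    (hli : LinearIndependent ℝ (Fin.snoc e k : Fin (q + 1) → Fin (q + 1) → ℝ))
    (w : Fin q → ℝ) : (Fin.snoc w 1 ᵥ* (Tmat q e k)⁻¹) ⬝ᵥ k = 1 := by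
  have hk : Tmat q e k *ᵥ Fin.snoc 0 1 = k := by simp [Tmat_mulVec_snoc, Emap]
  have := psiB_Tmat_mulVec_snoc hli 0 1 w 0
  rw [hk, psiB_eq_vecMul_dotProduct] at this
  simpa using this

theorem exists_psiB_eq_div
    (hli : LinearIndependent ℝ (Fin.snoc e k : Fin (q + 1) → Fin (q + 1) → ℝ))
    {c : Fin (q + 1) → ℝ} (hc : 0 < c ⬝ᵥ k) (β : ℝ) :
    ∃ v, ∀ y, psiB q (Tmat q e k)⁻¹ y v = (c ⬝ᵥ y - β) / (c ⬝ᵥ k) := by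
  set c₀ := (c ⬝ᵥ k)⁻¹ • c
  have hsnoc : Fin.snoc (Fin.init (c₀ ᵥ* Tmat q e k)) 1 = c₀ ᵥ* Tmat q e k := by
    rw [← Fin.snoc_init_self (c₀ ᵥ* Tmat q e k), vecMul_Tmat_last, smul_dotProduct, smul_eq_mul,
      inv_mul_cancel₀ hc.ne', Fin.init_snoc]
  refine ⟨(Fin.init (c₀ ᵥ* Tmat q e k), β / (c ⬝ᵥ k)), fun y => ?_⟩
  rw [psiB, hsnoc, ← dotProduct_mulVec, Tmat_mulVec_inv_Tmat_mulVec hli, smul_dotProduct,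
    smul_eq_mul]
  field_simp

end BasisMatrix

section Images

variable {q m : ℕ} {C : Set (Fin (q + 1) → ℝ)} {Γ : (Fin m → ℝ) → Fin (q + 1) → ℝ}
  {X : Set (Fin m → ℝ)} {k : Fin (q + 1) → ℝ} {e : Fin q → Fin (q + 1) → ℝ}

local notation "𝒫" => Pimg q m Γ X C
local notation "𝒟" => Dimg q m C k e Γ X
local notation "ψ" => psiB q (Tmat q e k)⁻¹
local notation "Ψ̂" => PsiHat q (Tmat q e k)⁻¹ 𝒫
local notation "Ψ̂⁻¹" => PsiHatInv q (Tmat q e k)⁻¹ 𝒟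

theorem convex_image_add (hcv : Convex ℝ C) (hcone : ∀ c ∈ C, ∀ t : ℝ, 0 ≤ t → t • c ∈ C)
    (hΓ : CConvex q m C Γ) (hXcv : Convex ℝ X) : Convex ℝ (Γ '' X + C) := by
  rintro _ ⟨_, ⟨x₁, hx₁, rfl⟩, c₁, hc₁, rfl⟩ _ ⟨_, ⟨x₂, hx₂, rfl⟩, c₂, hc₂, rfl⟩ a b ha hb hab
  obtain rfl : a = 1 - b := by linarith
  refine ⟨Γ ((1 - b) • x₁ + b • x₂), ⟨_, hXcv hx₁ hx₂ ha hb hab, rfl⟩,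
    ((1 - b) • Γ x₁ + b • Γ x₂ - Γ ((1 - b) • x₁ + b • x₂)) + ((1 - b) • c₁ + b • c₂), ?_, ?_⟩
  · exact add_mem_of_convex_of_smul_mem hcv hcone (hΓ x₁ x₂ b ⟨hb, by linarith⟩)
      (add_mem_of_convex_of_smul_mem hcv hcone (hcone _ hc₁ _ ha) (hcone _ hc₂ _ hb))
  · module

theorem convex_Pimg (hcv : Convex ℝ C) (hcone : ∀ c ∈ C, ∀ t : ℝ, 0 ≤ t → t • c ∈ C)
    (hΓ : CConvex q m C Γ) (hXcv : Convex ℝ X) : Convex ℝ 𝒫 :=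
  (convex_image_add hcv hcone hΓ hXcv).closure

theorem add_mem_Pimg (hcv : Convex ℝ C) (hcone : ∀ c ∈ C, ∀ t : ℝ, 0 ≤ t → t • c ∈ C)
    {y c : Fin (q + 1) → ℝ} (hy : y ∈ 𝒫) (hc : c ∈ C) : y + c ∈ 𝒫 := by
  refine map_mem_closure (f := (· + c)) (continuous_add_const c) hy ?_
  rintro _ ⟨g, hg, c₁, hc₁, rfl⟩
  exact ⟨g, hg, c₁ + c, add_mem_of_convex_of_smul_mem hcv hcone hc₁ hc, (add_assoc _ _ _).symm⟩

theorem mem_Dimg_iff_forall_le (w : Fin q → ℝ) (s : ℝ) :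
    (w, s) ∈ 𝒟 ↔ ∀ z, ∀ x ∈ X, ∀ r : ℝ, r • k - (Γ x - Emap q e z) ∈ C → s - z ⬝ᵥ w ≤ r := by
  change conjq q (fF q m C k e Γ X) (-w) ≤ ((-s : ℝ) : EReal) ↔ _
  simp only [conjq, iSup_le_iff, EReal.coe_sub_le_coe_iff, dotProduct_neg, sub_neg_eq_add,
    neg_add_eq_sub, fF, phiF, le_iInf₂_iff, le_sInf_iff, forall_mem_image, EReal.coe_le_coe_iff]
  rfl

theorem mem_Dimg_iff (hli : LinearIndependent ℝ (Fin.snoc e k : Fin (q + 1) → Fin (q + 1) → ℝ))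
    (v : (Fin q → ℝ) × ℝ) : v ∈ 𝒟 ↔ ∀ y ∈ 𝒫, 0 ≤ ψ y v := by
  obtain ⟨w, s⟩ := v
  have hcl : IsClosed {y | 0 ≤ ψ y (w, s)} :=
    isClosed_le continuous_const (by simp only [psiB]; fun_prop)
  rw [mem_Dimg_iff_forall_le]
  change _ ↔ 𝒫 ⊆ {y | 0 ≤ ψ y (w, s)}
  rw [Pimg, hcl.closure_subset_iff]
  constructor
  · rintro h _ ⟨_, ⟨x, hx, rfl⟩, c, hc, rfl⟩
    obtain ⟨z, r, hzr⟩ := exists_Tmat_mulVec_snoc_eq hli (Γ x + c)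
    have hC : r • k - (Γ x - Emap q e z) ∈ C := by
      have : Emap q e z + r • k - Γ x = c := by rw [← Tmat_mulVec_snoc, hzr, add_sub_cancel_left]
      rw [← this] at hc
      convert hc using 1
      abel
    have := h z x hx r hC
    change 0 ≤ ψ (Γ x + c) (w, s)
    rw [← hzr, psiB_Tmat_mulVec_snoc hli, dotProduct_comm]
    linarith
  · intro h z x hx r hC
    have hmem : Tmat q e k *ᵥ Fin.snoc z r ∈ Γ '' X + C :=
      ⟨Γ x, ⟨x, hx, rfl⟩, _, hC, by rw [Tmat_mulVec_snoc]; change Γ x + _ = _; abel⟩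
    have := h hmem
    simp only [mem_ofPred_eq, psiB_Tmat_mulVec_snoc hli, dotProduct_comm w] at this
    linarith

theorem convex_Dimg (hli : LinearIndependent ℝ (Fin.snoc e k : Fin (q + 1) → Fin (q + 1) → ℝ)) :
    Convex ℝ 𝒟 := by
  intro v₁ h₁ v₂ h₂ a b ha hb hab
  rw [mem_Dimg_iff hli] at h₁ h₂ ⊢
  intro y hy
  rw [psiB_affine_right _ _ _ _ _ _ hab]
  have := h₁ y hy
  have := h₂ y hy
  positivity

theorem dotProduct_nonneg_of_mem_Dimg (hcv : Convex ℝ C)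
    (hcone : ∀ c ∈ C, ∀ t : ℝ, 0 ≤ t → t • c ∈ C)
    (hli : LinearIndependent ℝ (Fin.snoc e k : Fin (q + 1) → Fin (q + 1) → ℝ))
    (hPne : (𝒫).Nonempty) {v : (Fin q → ℝ) × ℝ} (hv : v ∈ 𝒟) {c : Fin (q + 1) → ℝ} (hc : c ∈ C) :
    0 ≤ (Fin.snoc v.1 1 ᵥ* (Tmat q e k)⁻¹) ⬝ᵥ c := by
  obtain ⟨y, hy⟩ := hPne
  refine nonneg_of_forall_le_add_mul (β := 0) (A := ψ y v) fun t ht => ?_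
  have := (mem_Dimg_iff hli v).1 hv _ (add_mem_Pimg hcv hcone hy (hcone c hc t ht))
  rwa [psiB_add_left, dotProduct_smul, smul_eq_mul] at this

theorem dotProduct_pos_of_mem_Dimg (hcv : Convex ℝ C)
    (hcone : ∀ c ∈ C, ∀ t : ℝ, 0 ≤ t → t • c ∈ C) (hk : k ∈ intrinsicInterior ℝ C)
    (hli : LinearIndependent ℝ (Fin.snoc e k : Fin (q + 1) → Fin (q + 1) → ℝ))
    (hPne : (𝒫).Nonempty) {v : (Fin q → ℝ) × ℝ} (hv : v ∈ 𝒟) {c : Fin (q + 1) → ℝ}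
    (hc : c ∈ intrinsicInterior ℝ C) :
    0 < (Fin.snoc v.1 1 ᵥ* (Tmat q e k)⁻¹) ⬝ᵥ c := by
  obtain ⟨t, ht, hmem⟩ :=
    exists_pos_smul_add_mem_of_mem_intrinsicInterior (intrinsicInterior_subset hk) hc
  have := dotProduct_nonneg_of_mem_Dimg hcv hcone hli hPne hv hmem
  rw [dotProduct_add, dotProduct_smul, dotProduct_smul, vecMul_snoc_inv_Tmat_dotProduct hli,
    smul_eq_mul, smul_eq_mul] at this
  nlinarith

/-- A separating functional `c` is tilted by a small multiple of `ψ(·, v₁)` so that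
`c ⬝ᵥ k > 0`, and then comes from a point of `D` by `exists_psiB_eq_div`. -/
theorem mem_Pimg_iff (hcv : Convex ℝ C) (hcone : ∀ c ∈ C, ∀ t : ℝ, 0 ≤ t → t • c ∈ C)
    (hΓ : CConvex q m C Γ) (hXcv : Convex ℝ X) (hk : k ∈ C)
    (hli : LinearIndependent ℝ (Fin.snoc e k : Fin (q + 1) → Fin (q + 1) → ℝ))
    (hPne : (𝒫).Nonempty) (hDne : (𝒟).Nonempty) (y : Fin (q + 1) → ℝ) :
    y ∈ 𝒫 ↔ ∀ v ∈ 𝒟, 0 ≤ ψ y v := by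
  refine ⟨fun hy v hv => (mem_Dimg_iff hli v).1 hv y hy, fun h => ?_⟩
  by_contra hy
  obtain ⟨c, β, hcy, hcP⟩ :=
    exists_dotProduct_lt_forall_lt_of_notMem (convex_Pimg hcv hcone hΓ hXcv) isClosed_closure hy
  obtain ⟨v₁, hv₁⟩ := hDne
  set d := Fin.snoc v₁.1 1 ᵥ* (Tmat q e k)⁻¹
  have hψv₁ (y') : ψ y' v₁ = d ⬝ᵥ y' - v₁.2 := psiB_eq_vecMul_dotProduct _ _ _
  have hck : 0 ≤ c ⬝ᵥ k := by
    obtain ⟨y₁, hy₁⟩ := hPne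
    refine nonneg_of_forall_le_add_mul (A := c ⬝ᵥ y₁) (β := β) fun t ht => ?_
    have := hcP _ (add_mem_Pimg hcv hcone hy₁ (hcone k hk t ht))
    rw [dotProduct_add, dotProduct_smul, smul_eq_mul] at this
    linarith
  obtain ⟨ε, hε, hεy⟩ := exists_pos_mul_lt (sub_pos.2 hcy) (ψ y v₁)
  have hpos : 0 < (c + ε • d) ⬝ᵥ k := by
    rw [add_dotProduct, smul_dotProduct, vecMul_snoc_inv_Tmat_dotProduct hli, smul_eq_mul]
    linarith
  obtain ⟨v₂, hv₂⟩ := exists_psiB_eq_div hli hpos (β + ε * v₁.2)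
  have hlin (y') : (c + ε • d) ⬝ᵥ y' - (β + ε * v₁.2) = c ⬝ᵥ y' - β + ε * ψ y' v₁ := by
    rw [hψv₁, add_dotProduct, smul_dotProduct, smul_eq_mul]
    ring
  have hv₂D : v₂ ∈ 𝒟 := by
    refine (mem_Dimg_iff hli v₂).2 fun y' hy' => ?_
    rw [hv₂, hlin]
    have := (mem_Dimg_iff hli v₁).1 hv₁ y' hy'
    have := hcP y' hy'
    positivity
  have := h v₂ hv₂D
  rw [hv₂, hlin] at this
  have := (div_nonneg_iff.1 this).resolve_right (by rintro ⟨-, h⟩; linarith)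
  linarith [this.1]

theorem exists_eq_PsiHatInv_singleton_of_isKMaxExpFace (hcv : Convex ℝ C)
    (hcone : ∀ c ∈ C, ∀ t : ℝ, 0 ≤ t → t • c ∈ C) (hΓ : CConvex q m C Γ) (hXcv : Convex ℝ X)
    (hk : k ∈ C) (hli : LinearIndependent ℝ (Fin.snoc e k : Fin (q + 1) → Fin (q + 1) → ℝ))
    (hPne : (𝒫).Nonempty) {Fs : Set ((Fin q → ℝ) × ℝ)} (hFs : IsKMaxExpFace q 𝒟 Fs) :
    ∃ y ∈ 𝒫, Fs = Ψ̂⁻¹ {y} := by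
  obtain ⟨⟨u, s, α, ⟨-, ⟨⟨w₁, t₁⟩, hv₁H, hv₁D⟩, hle⟩, rfl⟩, hmax⟩ := hFs
  change w₁ ⬝ᵥ u + t₁ * s = α at hv₁H
  have hlower : (w₁, t₁ - 1) ∈ 𝒟 := (mem_Dimg_iff hli _).2 fun y hy => by
    rw [psiB_mk_eq_add_sub _ _ _ _ t₁]
    linarith [(mem_Dimg_iff hli _).1 hv₁D y hy]
  have hs : 0 < s := by
    have hle₁ : w₁ ⬝ᵥ u + (t₁ - 1) * s ≤ α := hle _ hlower
    rcases (show 0 ≤ s by linarith).lt_or_eq with hs | rfl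
    · exact hs
    · refine absurd ?_ (KMaxPt_iff.1 (hmax _ ⟨?_, hlower⟩) 1 one_pos)
      · simpa using hv₁D
      · simpa using hv₁H
  set y := Tmat q e k *ᵥ Fin.snoc (-(s⁻¹ • u)) (α / s)
  have hψ (v : (Fin q → ℝ) × ℝ) : ψ y v = (α - (v.1 ⬝ᵥ u + v.2 * s)) / s := by
    rw [psiB_Tmat_mulVec_snoc hli, dotProduct_neg, dotProduct_smul, smul_eq_mul]
    field_simp
    ring
  have hyP : y ∈ 𝒫 := by
    refine (mem_Pimg_iff hcv hcone hΓ hXcv hk hli hPne ⟨_, hv₁D⟩ y).2 fun v hv => ?_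
    rw [hψ]
    exact div_nonneg (by linarith [hle v hv]) hs.le
  refine ⟨y, hyP, ?_⟩
  ext v
  simp only [PsiHatInv_singleton, mem_inter_iff, mem_ofPred_eq, hψ, div_eq_zero_iff, hs.ne',
    or_false, sub_eq_zero, eq_comm (a := α)]

theorem exists_eq_PsiHat_singleton_of_isRelCMinExpFace (hcv : Convex ℝ C)
    (hcone : ∀ c ∈ C, ∀ t : ℝ, 0 ≤ t → t • c ∈ C) (hk : k ∈ intrinsicInterior ℝ C)
    (hli : LinearIndependent ℝ (Fin.snoc e k : Fin (q + 1) → Fin (q + 1) → ℝ))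
    {F : Set (Fin (q + 1) → ℝ)} (hF : IsRelCMinExpFace q C 𝒫 F) :
    ∃ v ∈ 𝒟, F = Ψ̂ {v} := by
  obtain ⟨⟨n, α, ⟨-, ⟨y₂, hy₂H, hy₂P⟩, hle⟩, rfl⟩, hmin⟩ := hF
  change n ⬝ᵥ y₂ = α at hy₂H
  have hnC (c : Fin (q + 1) → ℝ) (hc : c ∈ C) : n ⬝ᵥ c ≤ 0 := by
    have := hle _ (add_mem_Pimg hcv hcone hy₂P hc)
    rw [dotProduct_add] at this
    linarith
  have hnk : 0 < -n ⬝ᵥ k := by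
    rw [neg_dotProduct, neg_pos]
    refine (hnC k (intrinsicInterior_subset hk)).lt_of_ne fun h0 => ?_
    have hy₂k : y₂ + k ∈ {y | n ⬝ᵥ y = α} ∩ 𝒫 :=
      ⟨by simp [dotProduct_add, h0, hy₂H],
        add_mem_Pimg hcv hcone hy₂P (intrinsicInterior_subset hk)⟩
    exact (hmin _ hy₂k).subset ⟨hy₂P, _, rfl, k, hk, add_sub_cancel_right _ _⟩
  obtain ⟨v, hv⟩ := exists_psiB_eq_div hli hnk (-α)
  have hψ (y : Fin (q + 1) → ℝ) : ψ y v = (α - n ⬝ᵥ y) / (-n ⬝ᵥ k) := by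
    rw [hv, neg_dotProduct]
    ring
  refine ⟨v, (mem_Dimg_iff hli v).2 fun y hy => ?_, ?_⟩
  · rw [hψ]
    exact div_nonneg (by linarith [hle y hy]) hnk.le
  · ext y
    simp only [PsiHat_singleton, mem_inter_iff, mem_ofPred_eq, hψ, div_eq_zero_iff, hnk.ne',
      or_false, sub_eq_zero, eq_comm (a := α)]

theorem isRelCMinExpFace_PsiHat_singleton (hcv : Convex ℝ C)
    (hcone : ∀ c ∈ C, ∀ t : ℝ, 0 ≤ t → t • c ∈ C) (hk : k ∈ intrinsicInterior ℝ C)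
    (hli : LinearIndependent ℝ (Fin.snoc e k : Fin (q + 1) → Fin (q + 1) → ℝ))
    {v : (Fin q → ℝ) × ℝ} (hv : v ∈ 𝒟) (hne : (Ψ̂ {v}).Nonempty) :
    IsRelCMinExpFace q C 𝒫 (Ψ̂ {v}) := by
  set d := Fin.snoc v.1 1 ᵥ* (Tmat q e k)⁻¹
  have hψ (y : Fin (q + 1) → ℝ) : ψ y v = d ⬝ᵥ y - v.2 := psiB_eq_vecMul_dotProduct _ _ _
  have hD := (mem_Dimg_iff hli v).1 hv
  have hface : Ψ̂ {v} = {y | -d ⬝ᵥ y = -v.2} ∩ 𝒫 := by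
    ext y
    simp only [PsiHat_singleton, mem_inter_iff, mem_ofPred_eq, hψ, neg_dotProduct, neg_inj,
      sub_eq_zero]
  refine ⟨⟨-d, -v.2, ⟨fun h0 => ?_, hface ▸ hne, fun y hy => ?_⟩, hface⟩, fun y hy => ?_⟩
  · have : d ⬝ᵥ k = 1 := vecMul_snoc_inv_Tmat_dotProduct hli v.1
    rw [neg_eq_zero.1 h0, zero_dotProduct] at this
    exact zero_ne_one this
  · rw [neg_dotProduct, neg_le_neg_iff]
    linarith [hD y hy, hψ y]
  · rw [PsiHat_singleton] at hy
    have hy0 : ψ y v = 0 := hy.1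
    refine eq_empty_iff_forall_notMem.2 ?_
    rintro p ⟨hpP, a, ha, c, hc, hp⟩
    rw [mem_singleton_iff] at ha
    rw [← hp, ha] at hpP
    have hpos := dotProduct_pos_of_mem_Dimg hcv hcone hk hli ⟨y, hy.2⟩ hv hc
    have := psiB_add_left (Tmat q e k)⁻¹ (y - c) c v
    rw [sub_add_cancel] at this
    linarith [hD _ hpP]

theorem isKMaxExpFace_PsiHatInv_singleton
    (hli : LinearIndependent ℝ (Fin.snoc e k : Fin (q + 1) → Fin (q + 1) → ℝ))
    {y : Fin (q + 1) → ℝ} (hy : y ∈ 𝒫) (hne : (Ψ̂⁻¹ {y}).Nonempty) :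
    IsKMaxExpFace q 𝒟 (Ψ̂⁻¹ {y}) := by
  set z := Fin.init ((Tmat q e k)⁻¹ *ᵥ y)
  set r := ((Tmat q e k)⁻¹ *ᵥ y) (Fin.last q)
  have hψ (v : (Fin q → ℝ) × ℝ) : ψ y v = v.1 ⬝ᵥ z + r - v.2 :=
    psiB_eq_dotProduct_init_add_last _ _ _
  have hface : Ψ̂⁻¹ {y} =
      {p : (Fin q → ℝ) × ℝ | p.1 ⬝ᵥ -z + p.2 * 1 = r} ∩ 𝒟 := by
    ext v
    simp only [PsiHatInv_singleton, mem_inter_iff, mem_ofPred_eq, hψ, dotProduct_neg, mul_one]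
    exact and_congr_left fun _ => by constructor <;> intro <;> linarith
  refine ⟨⟨-z, 1, r, ⟨fun h => one_ne_zero (congrArg Prod.snd h), hface ▸ hne, fun p hp => ?_⟩,
    hface⟩, fun v hv => KMaxPt_iff.2 fun t ht hmem => ?_⟩
  · rw [dotProduct_neg, mul_one]
    linarith [(mem_Dimg_iff hli p).1 hp y hy, hψ p]
  · rw [PsiHatInv_singleton] at hv
    have hv0 : ψ y v = 0 := hv.1
    have := (mem_Dimg_iff hli _).1 hmem y hy
    rw [hψ] at this hv0
    simp only at this
    linarith

theorem PsiHat_eq_PsiHat_singleton_of_mem_intrinsicInterior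
    (hli : LinearIndependent ℝ (Fin.snoc e k : Fin (q + 1) → Fin (q + 1) → ℝ))
    {Fs : Set ((Fin q → ℝ) × ℝ)} (hFs : Fs ⊆ 𝒟) {v₀ : (Fin q → ℝ) × ℝ}
    (hv₀ : v₀ ∈ intrinsicInterior ℝ Fs) :
    Ψ̂ Fs = Ψ̂ {v₀} := by
  refine Subset.antisymm (PsiHat_anti _ (singleton_subset_iff.2 (intrinsicInterior_subset hv₀))) ?_
  rw [PsiHat_singleton]
  rintro y ⟨hy0, hyP⟩
  exact mem_iInter₂.2 fun v hv => ⟨eqOn_zero_of_nonneg_of_mem_intrinsicInterior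
    (psiB_affine_right _ y) (fun v' hv' => (mem_Dimg_iff hli v').1 (hFs hv') y hyP) hv₀ hy0 hv,
    hyP⟩

theorem PsiHatInv_eq_PsiHatInv_singleton_of_mem_intrinsicInterior
    (hli : LinearIndependent ℝ (Fin.snoc e k : Fin (q + 1) → Fin (q + 1) → ℝ))
    {F : Set (Fin (q + 1) → ℝ)} (hF : F ⊆ 𝒫) {y₀ : Fin (q + 1) → ℝ}
    (hy₀ : y₀ ∈ intrinsicInterior ℝ F) :
    Ψ̂⁻¹ F = Ψ̂⁻¹ {y₀} := by
  refine Subset.antisymm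
    (biInter_subset_biInter_left (singleton_subset_iff.2 (intrinsicInterior_subset hy₀))) ?_
  rw [PsiHatInv_singleton]
  rintro v ⟨hv0, hvD⟩
  exact mem_iInter₂.2 fun y hy => ⟨eqOn_zero_of_nonneg_of_mem_intrinsicInterior
    (psiB_affine_left _ v) (fun y' hy' => (mem_Dimg_iff hli v).1 hvD y' (hF hy')) hy₀ hv0 hy,
    hvD⟩

theorem isRelCMinExpFace_PsiHat_of_isKMaxExpFace (hcv : Convex ℝ C)
    (hcone : ∀ c ∈ C, ∀ t : ℝ, 0 ≤ t → t • c ∈ C) (hΓ : CConvex q m C Γ) (hXcv : Convex ℝ X)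
    (hk : k ∈ intrinsicInterior ℝ C)
    (hli : LinearIndependent ℝ (Fin.snoc e k : Fin (q + 1) → Fin (q + 1) → ℝ))
    (hPne : (𝒫).Nonempty) {Fs : Set ((Fin q → ℝ) × ℝ)} (hFs : IsKMaxExpFace q 𝒟 Fs) :
    IsRelCMinExpFace q C 𝒫 (Ψ̂ Fs) ∧ Ψ̂⁻¹ (Ψ̂ Fs) = Fs := by
  have hne : Fs.Nonempty := by
    obtain ⟨⟨_, _, _, ⟨_, hne, _⟩, rfl⟩, _⟩ := hFs
    exact hne
  obtain ⟨y, hyP, rfl⟩ := exists_eq_PsiHatInv_singleton_of_isKMaxExpFace hcv hcone hΓ hXcv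
    (intrinsicInterior_subset hk) hli hPne hFs
  have hsub : Ψ̂⁻¹ {y} ⊆ 𝒟 := by
    rw [PsiHatInv_singleton]
    exact inter_subset_right
  have hcvx : Convex ℝ (Ψ̂⁻¹ {y}) := by
    rw [PsiHatInv_singleton]
    exact (convex_setOf_eq_zero_of_affine (psiB_affine_right _ y)).inter (convex_Dimg hli)
  obtain ⟨v₀, hv₀⟩ := hne.intrinsicInterior hcvx
  have hyv₀ : y ∈ Ψ̂ {v₀} := by
    have := intrinsicInterior_subset hv₀
    rw [PsiHatInv_singleton] at this
    rw [PsiHat_singleton]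
    exact ⟨this.1, hyP⟩
  refine ⟨?_, PsiHatInv_PsiHat_PsiHatInv_singleton _ hyP⟩
  rw [PsiHat_eq_PsiHat_singleton_of_mem_intrinsicInterior hli hsub hv₀]
  exact isRelCMinExpFace_PsiHat_singleton hcv hcone hk hli (hsub (intrinsicInterior_subset hv₀))
    ⟨y, hyv₀⟩

theorem isKMaxExpFace_PsiHatInv_of_isRelCMinExpFace (hcv : Convex ℝ C)
    (hcone : ∀ c ∈ C, ∀ t : ℝ, 0 ≤ t → t • c ∈ C) (hΓ : CConvex q m C Γ) (hXcv : Convex ℝ X)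
    (hk : k ∈ intrinsicInterior ℝ C)
    (hli : LinearIndependent ℝ (Fin.snoc e k : Fin (q + 1) → Fin (q + 1) → ℝ))
    {F : Set (Fin (q + 1) → ℝ)} (hF : IsRelCMinExpFace q C 𝒫 F) :
    IsKMaxExpFace q 𝒟 (Ψ̂⁻¹ F) ∧ Ψ̂ (Ψ̂⁻¹ F) = F := by
  have hne : F.Nonempty := by
    obtain ⟨⟨_, _, ⟨_, hne, _⟩, rfl⟩, _⟩ := hF
    exact hne
  obtain ⟨v, hvD, rfl⟩ := exists_eq_PsiHat_singleton_of_isRelCMinExpFace hcv hcone hk hli hF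
  have hsub : Ψ̂ {v} ⊆ 𝒫 := by
    rw [PsiHat_singleton]
    exact inter_subset_right
  have hcvx : Convex ℝ (Ψ̂ {v}) := by
    rw [PsiHat_singleton]
    exact (convex_setOf_eq_zero_of_affine (psiB_affine_left _ v)).inter
      (convex_Pimg hcv hcone hΓ hXcv)
  obtain ⟨y₀, hy₀⟩ := hne.intrinsicInterior hcvx
  have hvy₀ : v ∈ Ψ̂⁻¹ {y₀} := by
    have := intrinsicInterior_subset hy₀
    rw [PsiHat_singleton] at this
    rw [PsiHatInv_singleton]
    exact ⟨this.1, hvD⟩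
  refine ⟨?_, PsiHat_PsiHatInv_PsiHat_singleton _ hvD⟩
  rw [PsiHatInv_eq_PsiHatInv_singleton_of_mem_intrinsicInterior hli hsub hy₀]
  exact isKMaxExpFace_PsiHatInv_singleton hli (hsub (intrinsicInterior_subset hy₀)) ⟨v, hvy₀⟩

end Images

theorem stmt16_general (q m : ℕ) (C : Set (Fin (q + 1) → ℝ))
    (hcv : Convex ℝ C)
    (hcone : ∀ c ∈ C, ∀ t : ℝ, 0 ≤ t → t • c ∈ C)
    (Γ : (Fin m → ℝ) → Fin (q + 1) → ℝ) (hΓ : CConvex q m C Γ)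
    (X : Set (Fin m → ℝ)) (hXcv : Convex ℝ X)
    (k : Fin (q + 1) → ℝ) (hk : k ∈ intrinsicInterior ℝ C)
    (e : Fin q → Fin (q + 1) → ℝ)
    (hli : LinearIndependent ℝ (Fin.snoc e k : Fin (q + 1) → Fin (q + 1) → ℝ))
    (hP : (Pimg q m Γ X C).Nonempty ∧ Pimg q m Γ X C ≠ Set.univ) :
    (∀ Fs : Set ((Fin q → ℝ) × ℝ),
        IsKMaxExpFace q (Dimg q m C k e Γ X) Fs →
        IsRelCMinExpFace q C (Pimg q m Γ X C)
            (PsiHat q (Tmat q e k)⁻¹ (Pimg q m Γ X C) Fs) ∧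
          PsiHatInv q (Tmat q e k)⁻¹ (Dimg q m C k e Γ X)
              (PsiHat q (Tmat q e k)⁻¹ (Pimg q m Γ X C) Fs) = Fs) ∧
    (∀ F : Set (Fin (q + 1) → ℝ),
        IsRelCMinExpFace q C (Pimg q m Γ X C) F →
        IsKMaxExpFace q (Dimg q m C k e Γ X)
            (PsiHatInv q (Tmat q e k)⁻¹ (Dimg q m C k e Γ X) F) ∧
          PsiHat q (Tmat q e k)⁻¹ (Pimg q m Γ X C)
              (PsiHatInv q (Tmat q e k)⁻¹ (Dimg q m C k e Γ X) F) = F) ∧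
    (∀ Fs₁ Fs₂ : Set ((Fin q → ℝ) × ℝ),
        IsKMaxExpFace q (Dimg q m C k e Γ X) Fs₁ →
        IsKMaxExpFace q (Dimg q m C k e Γ X) Fs₂ → Fs₁ ⊆ Fs₂ →
        PsiHat q (Tmat q e k)⁻¹ (Pimg q m Γ X C) Fs₂ ⊆
          PsiHat q (Tmat q e k)⁻¹ (Pimg q m Γ X C) Fs₁) := by
  exact ⟨fun _ hFs => isRelCMinExpFace_PsiHat_of_isKMaxExpFace hcv hcone hΓ hXcv hk hli hP.1 hFs,
    fun _ hF => isKMaxExpFace_PsiHatInv_of_isRelCMinExpFace hcv hcone hΓ hXcv hk hli hF,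
    fun _ _ _ _ hsub => PsiHat_anti _ hsub⟩

/-- Ψ̂ is an inclusion-reversing one-to-one map between the
K-maximal exposed faces of D and the relatively C-minimal exposed faces of P,
with inverse Ψ̂⁻¹. -/
theorem stmt16 (q m : ℕ) (C : Set (Fin (q + 1) → ℝ))
    (hne : C.Nonempty) (hcl : IsClosed C) (hcv : Convex ℝ C)
    (hcone : ∀ c ∈ C, ∀ t : ℝ, 0 ≤ t → t • c ∈ C)
    (hnotlin : ¬∃ W : Submodule ℝ (Fin (q + 1) → ℝ), (W : Set (Fin (q + 1) → ℝ)) = C)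
    (Γ : (Fin m → ℝ) → Fin (q + 1) → ℝ) (hΓ : CConvex q m C Γ)
    (X : Set (Fin m → ℝ)) (hX : X.Nonempty) (hXcv : Convex ℝ X)
    (k : Fin (q + 1) → ℝ) (hk : k ∈ intrinsicInterior ℝ C)
    (e : Fin q → Fin (q + 1) → ℝ)
    (hli : LinearIndependent ℝ (Fin.snoc e k : Fin (q + 1) → Fin (q + 1) → ℝ))
    (hP : (Pimg q m Γ X C).Nonempty ∧ Pimg q m Γ X C ≠ Set.univ) :
    (∀ Fs : Set ((Fin q → ℝ) × ℝ),
        IsKMaxExpFace q (Dimg q m C k e Γ X) Fs →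
        IsRelCMinExpFace q C (Pimg q m Γ X C)
            (PsiHat q (Tmat q e k)⁻¹ (Pimg q m Γ X C) Fs) ∧
          PsiHatInv q (Tmat q e k)⁻¹ (Dimg q m C k e Γ X)
              (PsiHat q (Tmat q e k)⁻¹ (Pimg q m Γ X C) Fs) = Fs) ∧
    (∀ F : Set (Fin (q + 1) → ℝ),
        IsRelCMinExpFace q C (Pimg q m Γ X C) F →
        IsKMaxExpFace q (Dimg q m C k e Γ X)
            (PsiHatInv q (Tmat q e k)⁻¹ (Dimg q m C k e Γ X) F) ∧
          PsiHat q (Tmat q e k)⁻¹ (Pimg q m Γ X C)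
              (PsiHatInv q (Tmat q e k)⁻¹ (Dimg q m C k e Γ X) F) = F) ∧
    (∀ Fs₁ Fs₂ : Set ((Fin q → ℝ) × ℝ),
        IsKMaxExpFace q (Dimg q m C k e Γ X) Fs₁ →
        IsKMaxExpFace q (Dimg q m C k e Γ X) Fs₂ → Fs₁ ⊆ Fs₂ →
        PsiHat q (Tmat q e k)⁻¹ (Pimg q m Γ X C) Fs₂ ⊆
          PsiHat q (Tmat q e k)⁻¹ (Pimg q m Γ X C) Fs₁) :=
  stmt16_general q m C hcv hcone Γ hΓ X hXcv k hk e hli hP
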